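/- arXiv:2009.13023 — 2 statements merged into one kernel-verified Lean document; each statement's English description precedes it below -/
import Mathlib

section
/- The function ζ(λ) = 1 - γ(N, Nλ/σ²)/Γ(N) + γ(N, Nλ/(a+σ²))/Γ(N), where γ is the lower incomplete gamma function, Γ the gamma function, N ≥ 1 a positive integer, σ² > 0, and a > 0, attains its minimum over λ > 0 at λ* = σ²(a+σ²)/a · ln((a+σ²)/σ²). -/
open Real Filter Set Topology

/-- Lower incomplete gamma function `γ(s,x) = ∫₀ˣ e^{-t} t^{s-1} dt`. -/
noncomputable def lowerGamma (s x : ℝ) : ℝ := ∫ t in (0:ℝ)..x, Real.exp (-t) * t ^ (s - 1)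

lemma cont_integrand (N : ℕ) (hN : 1 ≤ N) :
    Continuous (fun t : ℝ => Real.exp (-t) * t ^ ((N:ℝ) - 1)) := by
  have h : (0:ℝ) ≤ (N:ℝ) - 1 := by
    have : (1:ℝ) ≤ N := by exact_mod_cast hN
    linarith
  exact (Real.continuous_exp.comp continuous_neg).mul (Real.continuous_rpow_const h)

lemma lowerGamma_hasDerivAt (N : ℕ) (hN : 1 ≤ N) (x : ℝ) :
    HasDerivAt (lowerGamma N) (Real.exp (-x) * x ^ ((N:ℝ) - 1)) x := by
  have hc := cont_integrand N hN
  exact intervalIntegral.integral_hasDerivAt_right (hc.intervalIntegrable _ _)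
    hc.aestronglyMeasurable.stronglyMeasurableAtFilter hc.continuousAt

lemma Efact (c l e : ℝ) (hc : 0 < c) (hl : 0 < l) :
    Real.exp (-(c * l)) * (c * l) ^ e * c = l ^ e * Real.exp ((e + 1) * Real.log c - c * l) := by
  calc Real.exp (-(c * l)) * (c * l) ^ e * c
      = Real.exp (-(c * l)) * (Real.exp (Real.log c * e) * l ^ e) * Real.exp (Real.log c) := by
        rw [Real.mul_rpow hc.le hl.le, Real.rpow_def_of_pos hc, Real.exp_log hc]
    _ = l ^ e * (Real.exp (-(c * l)) * Real.exp (Real.log c * e) * Real.exp (Real.log c)) := by ring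
    _ = l ^ e * Real.exp ((e + 1) * Real.log c - c * l) := by
        rw [← Real.exp_add, ← Real.exp_add]; ring_nf

lemma key_iff (N : ℕ) (hN : 1 ≤ N) (σ2 a l : ℝ) (hσ : 0 < σ2) (ha : 0 < a) (hl : 0 < l) :
    (Real.exp (-(((N:ℝ)/(a+σ2)) * l)) * (((N:ℝ)/(a+σ2)) * l) ^ ((N:ℝ)-1) * ((N:ℝ)/(a+σ2))
      < Real.exp (-(((N:ℝ)/σ2) * l)) * (((N:ℝ)/σ2) * l) ^ ((N:ℝ)-1) * ((N:ℝ)/σ2))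
    ↔ l < σ2 * (a + σ2) / a * Real.log ((a + σ2) / σ2) := by
  have haσ : (0:ℝ) < a + σ2 := by linarith
  have hNpos : (0:ℝ) < (N:ℝ) := by exact_mod_cast hN
  have hc1 : (0:ℝ) < (N:ℝ)/σ2 := by positivity
  have hc2 : (0:ℝ) < (N:ℝ)/(a+σ2) := by positivity
  rw [Efact _ _ _ hc2 hl, Efact _ _ _ hc1 hl]
  have he : ((N:ℝ)-1) + 1 = (N:ℝ) := by ring
  rw [he]
  have hle : (0:ℝ) < l ^ ((N:ℝ)-1) := Real.rpow_pos_of_pos hl _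
  rw [mul_lt_mul_iff_right₀ hle, Real.exp_lt_exp]
  have hlog1 : Real.log ((N:ℝ)/σ2) = Real.log N - Real.log σ2 :=
    Real.log_div (ne_of_gt hNpos) (ne_of_gt hσ)
  have hlog2 : Real.log ((N:ℝ)/(a+σ2)) = Real.log N - Real.log (a+σ2) :=
    Real.log_div (ne_of_gt hNpos) (ne_of_gt haσ)
  have hlog3 : Real.log ((a+σ2)/σ2) = Real.log (a+σ2) - Real.log σ2 :=
    Real.log_div (ne_of_gt haσ) (ne_of_gt hσ)
  rw [hlog1, hlog2, hlog3]
  set K := Real.log (a+σ2) - Real.log σ2 with hK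
  have hm : (N:ℝ)/σ2 - (N:ℝ)/(a+σ2) = (N:ℝ)*a/(σ2*(a+σ2)) := by field_simp; ring
  have hmpos : (0:ℝ) < (N:ℝ)*a/(σ2*(a+σ2)) := by positivity
  have hmL : (N:ℝ)*a/(σ2*(a+σ2)) * (σ2*(a+σ2)/a * K) = (N:ℝ)*K := by field_simp
  constructor
  · intro h
    have h1 : ((N:ℝ)/σ2 - (N:ℝ)/(a+σ2)) * l < (N:ℝ)*K := by nlinarith [h]
    rw [hm] at h1
    rw [← hmL] at h1
    exact lt_of_mul_lt_mul_left h1 hmpos.le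
  · intro h
    have h2 : (N:ℝ)*a/(σ2*(a+σ2)) * l < (N:ℝ)*a/(σ2*(a+σ2)) * (σ2*(a+σ2)/a * K) :=
      (mul_lt_mul_iff_right₀ hmpos).mpr h
    rw [hmL, ← hm] at h2
    nlinarith [h2]

lemma key_iff2 (N : ℕ) (hN : 1 ≤ N) (σ2 a l : ℝ) (hσ : 0 < σ2) (ha : 0 < a) (hl : 0 < l) :
    (Real.exp (-(((N:ℝ)/σ2) * l)) * (((N:ℝ)/σ2) * l) ^ ((N:ℝ)-1) * ((N:ℝ)/σ2)
      < Real.exp (-(((N:ℝ)/(a+σ2)) * l)) * (((N:ℝ)/(a+σ2)) * l) ^ ((N:ℝ)-1) * ((N:ℝ)/(a+σ2)))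
    ↔ σ2 * (a + σ2) / a * Real.log ((a + σ2) / σ2) < l := by
  have haσ : (0:ℝ) < a + σ2 := by linarith
  have hNpos : (0:ℝ) < (N:ℝ) := by exact_mod_cast hN
  have hc1 : (0:ℝ) < (N:ℝ)/σ2 := by positivity
  have hc2 : (0:ℝ) < (N:ℝ)/(a+σ2) := by positivity
  rw [Efact _ _ _ hc2 hl, Efact _ _ _ hc1 hl]
  have he : ((N:ℝ)-1) + 1 = (N:ℝ) := by ring
  rw [he]
  have hle : (0:ℝ) < l ^ ((N:ℝ)-1) := Real.rpow_pos_of_pos hl _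
  rw [mul_lt_mul_iff_right₀ hle, Real.exp_lt_exp]
  have hlog1 : Real.log ((N:ℝ)/σ2) = Real.log N - Real.log σ2 :=
    Real.log_div (ne_of_gt hNpos) (ne_of_gt hσ)
  have hlog2 : Real.log ((N:ℝ)/(a+σ2)) = Real.log N - Real.log (a+σ2) :=
    Real.log_div (ne_of_gt hNpos) (ne_of_gt haσ)
  have hlog3 : Real.log ((a+σ2)/σ2) = Real.log (a+σ2) - Real.log σ2 :=
    Real.log_div (ne_of_gt haσ) (ne_of_gt hσ)
  rw [hlog1, hlog2, hlog3]
  set K := Real.log (a+σ2) - Real.log σ2 with hK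
  have hm : (N:ℝ)/σ2 - (N:ℝ)/(a+σ2) = (N:ℝ)*a/(σ2*(a+σ2)) := by field_simp; ring
  have hmpos : (0:ℝ) < (N:ℝ)*a/(σ2*(a+σ2)) := by positivity
  have hmL : (N:ℝ)*a/(σ2*(a+σ2)) * (σ2*(a+σ2)/a * K) = (N:ℝ)*K := by field_simp
  constructor
  · intro h
    have h1 : (N:ℝ)*K < ((N:ℝ)/σ2 - (N:ℝ)/(a+σ2)) * l := by nlinarith [h]
    rw [hm] at h1
    rw [← hmL] at h1
    exact lt_of_mul_lt_mul_left h1 hmpos.le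
  · intro h
    have h2 : (N:ℝ)*a/(σ2*(a+σ2)) * (σ2*(a+σ2)/a * K) < (N:ℝ)*a/(σ2*(a+σ2)) * l :=
      (mul_lt_mul_iff_right₀ hmpos).mpr h
    rw [hmL, ← hm] at h2
    nlinarith [h2]

theorem stmt_0 (N : ℕ) (hN : 1 ≤ N) (σ2 a : ℝ) (hσ : 0 < σ2) (ha : 0 < a) :
    (0 : ℝ) < σ2 * (a + σ2) / a * Real.log ((a + σ2) / σ2) ∧
    IsMinOn (fun l : ℝ => 1 - lowerGamma N ((N : ℝ) * l / σ2) / Real.Gamma N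
        + lowerGamma N ((N : ℝ) * l / (a + σ2)) / Real.Gamma N)
      (Set.Ioi 0) (σ2 * (a + σ2) / a * Real.log ((a + σ2) / σ2)) := by
  have haσ : (0:ℝ) < a + σ2 := by linarith
  have hNpos : (0:ℝ) < (N:ℝ) := by exact_mod_cast hN
  have hΓ : (0:ℝ) < Real.Gamma N := Real.Gamma_pos_of_pos hNpos
  set L := σ2 * (a + σ2) / a * Real.log ((a + σ2) / σ2) with hL
  have hLpos : 0 < L := by
    apply mul_pos (by positivity)
    exact Real.log_pos ((one_lt_div hσ).mpr (by linarith))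
  refine ⟨hLpos, ?_⟩
  set f : ℝ → ℝ := fun l : ℝ => 1 - lowerGamma N ((N : ℝ) * l / σ2) / Real.Gamma N
        + lowerGamma N ((N : ℝ) * l / (a + σ2)) / Real.Gamma N with hf
  set Df : ℝ → ℝ := fun l => 0 - Real.exp (-((N:ℝ) * l / σ2)) * ((N:ℝ) * l / σ2) ^ ((N:ℝ)-1) * ((N:ℝ)/σ2) / Real.Gamma N
      + Real.exp (-((N:ℝ) * l / (a+σ2))) * ((N:ℝ) * l / (a+σ2)) ^ ((N:ℝ)-1) * ((N:ℝ)/(a+σ2)) / Real.Gamma N with hDf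
  have hderiv : ∀ l : ℝ, HasDerivAt f (Df l) l := by
    intro l
    have inner1 : HasDerivAt (fun l : ℝ => (N:ℝ) * l / σ2) ((N:ℝ)/σ2) l := by
      simpa using ((hasDerivAt_id l).const_mul (N:ℝ)).div_const σ2
    have inner2 : HasDerivAt (fun l : ℝ => (N:ℝ) * l / (a+σ2)) ((N:ℝ)/(a+σ2)) l := by
      simpa using ((hasDerivAt_id l).const_mul (N:ℝ)).div_const (a+σ2)
    have h1 := (lowerGamma_hasDerivAt N hN ((N:ℝ) * l / σ2)).comp l inner1
    have h2 := (lowerGamma_hasDerivAt N hN ((N:ℝ) * l / (a+σ2))).comp l inner2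
    exact ((hasDerivAt_const l (1:ℝ)).sub (h1.div_const (Real.Gamma N))).add
      (h2.div_const (Real.Gamma N))
  have hdiff : Differentiable ℝ f := fun l => (hderiv l).differentiableAt
  have harg1 : ∀ l : ℝ, (N:ℝ) * l / σ2 = ((N:ℝ)/σ2) * l := fun l => by ring
  have harg2 : ∀ l : ℝ, (N:ℝ) * l / (a+σ2) = ((N:ℝ)/(a+σ2)) * l := fun l => by ring
  have hsign1 : ∀ l : ℝ, 0 < l → l < L → Df l < 0 := by
    intro l hl hlL
    have hE := (key_iff N hN σ2 a l hσ ha hl).mpr hlL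
    rw [hDf]
    simp only [harg1 l, harg2 l]
    have h1 := (div_lt_div_iff_of_pos_right hΓ).mpr hE
    linarith
  have hsign2 : ∀ l : ℝ, L < l → 0 < Df l := by
    intro l hlL
    have hl : 0 < l := lt_trans hLpos hlL
    have hE := (key_iff2 N hN σ2 a l hσ ha hl).mpr hlL
    rw [hDf]
    simp only [harg1 l, harg2 l]
    have h1 := (div_lt_div_iff_of_pos_right hΓ).mpr hE
    linarith
  have anti : StrictAntiOn f (Set.Icc 0 L) := by
    apply strictAntiOn_of_deriv_neg (convex_Icc 0 L) hdiff.continuous.continuousOn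
    intro x hx
    rw [interior_Icc] at hx
    rw [(hderiv x).deriv]
    exact hsign1 x hx.1 hx.2
  have mono : StrictMonoOn f (Set.Ici L) := by
    apply strictMonoOn_of_deriv_pos (convex_Ici L) hdiff.continuous.continuousOn
    intro x hx
    rw [interior_Ici] at hx
    rw [(hderiv x).deriv]
    exact hsign2 x hx
  rw [isMinOn_iff]
  intro x hx
  rcases lt_trichotomy x L with h | h | h
  · exact (anti ⟨(le_of_lt hx), h.le⟩ ⟨hLpos.le, le_rfl⟩ h).le
  · exact le_of_eq (by rw [h])
  · exact (mono Set.self_mem_Ici h.le h).le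
end

section
/- For N ≥ 1 a positive integer, σ² > 0 and a > 0, the stationary point condition for ζ(λ) = 1 - γ(N, Nλ/σ²)/Γ(N) + γ(N, Nλ/(a+σ²))/Γ(N) is: ζ'(λ) = 0 if and only if λ = σ²(a+σ²)/a · ln((a+σ²)/σ²), for λ > 0. -/
open Real Filter Set Topology

/-!
`ζ'(λ) = (c₂ e^{-c₂λ} (c₂λ)^{N-1} - c₁ e^{-c₁λ} (c₁λ)^{N-1}) / Γ(N)` with `c₁ = N/σ²` and
`c₂ = N/(a+σ²)`. For `λ > 0` both terms are positive, and taking logarithms the equation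
`ζ'(λ) = 0` becomes `N log c₁ - c₁λ = N log c₂ - c₂λ`, which is linear in `λ`.
-/

theorem hasDerivAt_lowerGamma {s : ℝ} (hs : 1 ≤ s) (x : ℝ) :
    HasDerivAt (lowerGamma s) (exp (-x) * x ^ (s - 1)) x :=
  ((continuous_neg.rexp.mul (continuous_rpow_const (by linarith))).integral_hasStrictDerivAt
    0 x).hasDerivAt

theorem hasDerivAt_lowerGamma_const_mul {s : ℝ} (hs : 1 ≤ s) (c x : ℝ) :
    HasDerivAt (fun y => lowerGamma s (c * y)) (c * (exp (-(c * x)) * (c * x) ^ (s - 1))) x := by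
  have h := (hasDerivAt_lowerGamma hs (c * x)).comp x ((hasDerivAt_id x).const_mul c)
  rwa [mul_one, mul_comm _ c] at h

theorem log_mul_exp_neg_mul_rpow {c x : ℝ} (hc : 0 < c) (hx : 0 < x) (s : ℝ) :
    log (c * (exp (-(c * x)) * (c * x) ^ (s - 1))) = s * log c + (s - 1) * log x - c * x := by
  have hcx : 0 < c * x := mul_pos hc hx
  rw [log_mul hc.ne' (by positivity), log_mul (exp_pos _).ne' (by positivity), log_exp,
    log_rpow hcx, log_mul hc.ne' hx.ne']
  ring

theorem mul_exp_neg_mul_rpow_eq_iff {c₁ c₂ x : ℝ} (hc₁ : 0 < c₁) (hc₂ : 0 < c₂) (hx : 0 < x)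
    (hne : c₁ ≠ c₂) (s : ℝ) :
    c₁ * (exp (-(c₁ * x)) * (c₁ * x) ^ (s - 1)) = c₂ * (exp (-(c₂ * x)) * (c₂ * x) ^ (s - 1)) ↔
      x = s * log (c₁ / c₂) / (c₁ - c₂) := by
  rw [← log_injOn_pos.eq_iff (mem_Ioi.mpr (by positivity)) (mem_Ioi.mpr (by positivity)),
    log_mul_exp_neg_mul_rpow hc₁ hx, log_mul_exp_neg_mul_rpow hc₂ hx, log_div hc₁.ne' hc₂.ne',
    eq_div_iff (sub_ne_zero.mpr hne)]
  constructor <;> intro h <;> linarith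

theorem stmt_1 (N : ℕ) (hN : 1 ≤ N) (σ2 a : ℝ) (hσ : 0 < σ2) (ha : 0 < a)
    (l : ℝ) (hl : 0 < l) :
    deriv (fun l : ℝ => 1 - lowerGamma N ((N : ℝ) * l / σ2) / Real.Gamma N
        + lowerGamma N ((N : ℝ) * l / (a + σ2)) / Real.Gamma N) l = 0
      ↔ l = σ2 * (a + σ2) / a * Real.log ((a + σ2) / σ2) := by
  have hN' : (1 : ℝ) ≤ N := by exact_mod_cast hN
  have hNpos : (0 : ℝ) < N := by linarith
  have hs : 0 < a + σ2 := by linarith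
  have hc₁ : 0 < (N : ℝ) / σ2 := by positivity
  have hc₂ : 0 < (N : ℝ) / (a + σ2) := by positivity
  have hne : (N : ℝ) / σ2 ≠ N / (a + σ2) :=
    (div_lt_div_of_pos_left hNpos hσ (by linarith)).ne'
  simp only [mul_div_right_comm (N : ℝ) _ σ2, mul_div_right_comm (N : ℝ) _ (a + σ2)]
  have hζ :=
    (((hasDerivAt_lowerGamma_const_mul hN' (N / σ2) l).div_const (Gamma N)).const_sub 1).fun_add
      ((hasDerivAt_lowerGamma_const_mul hN' (N / (a + σ2)) l).div_const (Gamma N))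
  rw [hζ.deriv, neg_add_eq_zero, div_left_inj' (Gamma_pos_of_pos hNpos).ne',
    mul_exp_neg_mul_rpow_eq_iff hc₁ hc₂ hl hne, div_div_div_cancel_left' _ _ hNpos.ne']
  have hgap : (N : ℝ) / σ2 - N / (a + σ2) = N * a / (σ2 * (a + σ2)) := by
    field_simp
    ring
  rw [hgap]
  field_simp
end
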